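/- arXiv:2302.11839 — 3 statements merged into one kernel-verified Lean document; each statement's English description precedes it below -/
import Mathlib

section
/- Let ℓ ≥ 4 and let G be a bipartite graph on n vertices that contains no path on ℓ vertices as a subgraph. Then e(G) ≤ (⌊ℓ/2⌋ - 1)·n. -/
open SimpleGraph Finset

/-!
Write `m = ⌊ℓ/2⌋`. It suffices to find, in every nonempty subgraph, a nonempty set `T` of
non-isolated vertices meeting at most `(m - 1)|T|` edges: deleting those edges and recursing
on the remaining vertices gives the bound. Take a longest path `p`, starting at `u`. If
`deg u < m`, take `T = {u}`. Otherwise all neighbours of `u` lie on `p` at odd positions, so `p`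
has exactly `2m` vertices (and `ℓ = 2m + 1`), and `u` is adjacent to the far end of `p`. The
resulting `2m`-cycle has no neighbour outside it, since that would give a path on `2m + 1`
vertices; so `T = V(p)` meets only the edges of a bipartite graph with parts of size `m`, at most
`m² ≤ (m - 1) · 2m` of them.
-/

/-- `G` contains a copy of `H` (as a subgraph): there is an injective graph
homomorphism from `H` to `G`. -/
def Contains {α β : Type*} (G : SimpleGraph α) (H : SimpleGraph β) : Prop :=
  ∃ f : H →g G, Function.Injective f

theorem contains_iff_isContained {α β : Type*} {G : SimpleGraph α} {H : SimpleGraph β} :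
    Contains G H ↔ H ⊑ G :=
  ⟨fun ⟨f, hf⟩ => ⟨⟨f, hf⟩⟩, fun ⟨f⟩ => ⟨f.toHom, f.injective⟩⟩

namespace SimpleGraph

variable {V : Type*} {G : SimpleGraph V}

theorem pathGraph_isContained_pathGraph {m n : ℕ} (h : m ≤ n) : pathGraph m ⊑ pathGraph n :=
  ⟨⟨⟨Fin.castLE h, fun hab => by simpa [pathGraph_adj] using hab⟩, Fin.castLE_injective h⟩⟩

theorem Walk.IsPath.length_add_two_le_of_free {ℓ : ℕ} (hfree : (pathGraph ℓ).Free G) {u v : V}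
    {p : G.Walk u v} (hp : p.IsPath) : p.length + 2 ≤ ℓ := by
  by_contra! h
  exact hfree ((pathGraph_isContained_pathGraph (by omega)).trans hp.isContained_pathGraph)

theorem Walk.IsPath.mem_support_of_adj_of_forall_length_le {u v y : V} {p : G.Walk u v}
    (hp : p.IsPath) (hmax : ∀ (u' v' : V) (q : G.Walk u' v'), q.IsPath → q.length ≤ p.length)
    (huy : G.Adj u y) : y ∈ p.support := by
  by_contra hy
  have := hmax _ _ _ (hp.cons hy (h := huy.symm))
  rw [Walk.length_cons] at this
  omega

theorem Walk.IsCycle.exists_isPath_length_eq_of_adj {v x y : V} {c : G.Walk v v}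
    (hc : c.IsCycle) (hx : x ∈ c.support) (hy : y ∉ c.support) (hxy : G.Adj x y) :
    ∃ (u : V) (p : G.Walk u y), p.IsPath ∧ p.length = c.length := by
  classical
  have hr : (c.rotate x hx).IsCycle := hc.rotate hx
  refine ⟨_, (c.rotate x hx).tail.concat hxy, hr.isPath_tail.concat (fun hy' => hy ?_) hxy, ?_⟩
  · rw [Walk.support_tail_of_not_nil _ hr.not_nil] at hy'
    exact (c.mem_support_rotate_iff x hx).1 (List.mem_of_mem_tail hy')
  · rw [Walk.length_concat, Walk.length_tail_add_one hr.not_nil, Walk.length_rotate]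

theorem Walk.IsPath.mem_support_of_adj_of_free {ℓ : ℕ} (hfree : (pathGraph ℓ).Free G)
    {u v : V} {p : G.Walk u v} (hp : p.IsPath) (huv : G.Adj u v) (hp2 : 2 ≤ p.length)
    (hpℓ : ℓ ≤ p.length + 2) {x y : V} (hx : x ∈ p.support) (hxy : G.Adj x y) :
    y ∈ p.support := by
  have hcyc : (Walk.cons huv.symm p).IsCycle :=
    Walk.isCycle_iff_isPath_tail_and_le_length.2 ⟨by simpa using hp, by simp; omega⟩
  by_contra hy
  have hy' : y ∉ (Walk.cons huv.symm p).support := by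
    rw [Walk.support_cons, List.mem_cons]
    rintro (rfl | h)
    exacts [hy p.end_mem_support, hy h]
  obtain ⟨w, q, hq, hqlen⟩ :=
    hcyc.exists_isPath_length_eq_of_adj (List.mem_cons_of_mem _ hx) hy' hxy
  have := hq.length_add_two_le_of_free hfree
  rw [hqlen, Walk.length_cons] at this
  omega

theorem Coloring.card_support_filter_le [DecidableEq V] (c : G.Coloring Bool) {u v : V}
    (p : G.Walk u v) :
    #{x ∈ p.support.toFinset | c x = c u} ≤ (p.length + 2) / 2 ∧
      #{x ∈ p.support.toFinset | c x ≠ c u} ≤ (p.length + 1) / 2 := by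
  induction p with
  | nil => simp [filter_singleton]
  | @cons u w _ h q ih =>
    have hw : c w = !c u := Bool.eq_not_iff.2 (c.valid h).symm
    have hsame : {x ∈ q.support.toFinset | c x = c u} = {x ∈ q.support.toFinset | c x ≠ c w} :=
      filter_congr fun x _ => by rw [hw]; cases c x <;> cases c u <;> decide
    have hdiff : {x ∈ q.support.toFinset | c x ≠ c u} = {x ∈ q.support.toFinset | c x = c w} :=
      filter_congr fun x _ => by rw [hw]; cases c x <;> cases c u <;> decide
    rw [Walk.support_cons, List.toFinset_cons, filter_insert, if_pos rfl, filter_insert,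
      if_neg (not_not.2 rfl), hsame, hdiff, Walk.length_cons]
    exact ⟨(card_insert_le _ _).trans (by omega), by omega⟩

variable [Fintype V] [DecidableEq V]

theorem Coloring.card_edgeFinset_filter_le [DecidableRel G.Adj] (c : G.Coloring Bool)
    {T : Finset V} (hT : ∀ x ∈ T, ∀ y, G.Adj x y → y ∈ T) (b : Bool) :
    #{e ∈ G.edgeFinset | ∃ x ∈ T, x ∈ e} ≤ #{x ∈ T | c x = b} * #{x ∈ T | c x ≠ b} := by
  set A := {x ∈ T | c x = b}
  set B := {x ∈ T | c x ≠ b}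
  have hcover : {e ∈ G.edgeFinset | ∃ x ∈ T, x ∈ e} ⊆ A.biUnion (G.incidenceFinset ·) := by
    intro e he
    obtain ⟨he, x, hx, hxe⟩ := mem_filter.1 he
    obtain ⟨y, rfl⟩ := Sym2.mem_iff_exists.1 hxe
    have hxy : G.Adj x y := mem_edgeFinset.1 he
    by_cases hcx : c x = b
    · exact mem_biUnion.2 ⟨x, mem_filter.2 ⟨hx, hcx⟩, (mem_incidenceFinset _ _ _).2 ⟨hxy, hxe⟩⟩
    · have hcy : c y = b := by
        rw [Bool.eq_not_iff.2 (c.valid hxy).symm, Bool.eq_not_iff.2 hcx, Bool.not_not]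
      exact mem_biUnion.2 ⟨y, mem_filter.2 ⟨hT x hx y hxy, hcy⟩,
        (mem_incidenceFinset _ _ _).2 ⟨hxy, Sym2.mem_mk_right _ _⟩⟩
  have hdeg : ∀ a ∈ A, G.degree a ≤ #B := by
    intro a ha
    rw [← card_neighborFinset_eq_degree]
    refine card_le_card fun y hy => ?_
    have hay : G.Adj a y := (mem_neighborFinset _ _ _).1 hy
    exact mem_filter.2 ⟨hT a (mem_filter.1 ha).1 y hay, (mem_filter.1 ha).2 ▸ (c.valid hay).symm⟩
  calc #{e ∈ G.edgeFinset | ∃ x ∈ T, x ∈ e}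
      ≤ #(A.biUnion (G.incidenceFinset ·)) := card_le_card hcover
    _ ≤ ∑ a ∈ A, #(G.incidenceFinset a) := card_biUnion_le
    _ ≤ ∑ _a ∈ A, #B :=
        sum_le_sum fun a ha => (card_incidenceFinset_eq_degree G a).trans_le (hdeg a ha)
    _ = #A * #B := by rw [sum_const, smul_eq_mul]

theorem card_edgeFinset_filter_singleton [DecidableRel G.Adj] (u : V) :
    #{e ∈ G.edgeFinset | ∃ x ∈ ({u} : Finset V), x ∈ e} = G.degree u := by
  simp [← card_incidenceFinset_eq_degree, incidenceFinset_eq_filter]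

theorem card_edgeFinset_le_of_forall_exists_sparse [DecidableRel G.Adj] (k : ℕ)
    (hsparse : ∀ (H : SimpleGraph V) [DecidableRel H.Adj], H ≤ G → H.edgeSet.Nonempty →
      ∃ T : Finset V, T.Nonempty ∧ ↑T ⊆ H.support ∧ #{e ∈ H.edgeFinset | ∃ x ∈ T, x ∈ e} ≤ k * #T)
    {s : Finset V} (hs : G.support ⊆ s) : #G.edgeFinset ≤ k * #s := by
  induction s using Finset.strongInduction generalizing G with
  | H s ih =>
    rcases G.edgeSet.eq_empty_or_nonempty with hE | hE
    · simp [edgeFinset, hE]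
    obtain ⟨T, hT, hTG, hTk⟩ := hsparse G le_rfl hE
    have hTs : T ⊆ s := coe_subset.1 (hTG.trans hs)
    let G' := G.deleteEdges {e | ∃ x ∈ T, x ∈ e}
    have hG' : G'.edgeFinset = {e ∈ G.edgeFinset | ¬ ∃ x ∈ T, x ∈ e} := by
      ext e
      simp [G', edgeSet_deleteEdges]
    have hG's : G'.support ⊆ ↑(s \ T) := by
      rintro x ⟨y, hxy⟩
      simp only [G', deleteEdges_adj, Set.mem_ofPred_eq, not_exists, not_and] at hxy
      exact mem_sdiff.2 ⟨hs ⟨y, hxy.1⟩, fun hx => hxy.2 x hx (Sym2.mem_mk_left _ _)⟩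
    have hrec := ih (s \ T) (sdiff_ssubset hTs hT)
      (fun H _ hH => hsparse H (hH.trans (deleteEdges_le _))) hG's
    calc #G.edgeFinset
        = #{e ∈ G.edgeFinset | ∃ x ∈ T, x ∈ e} + #{e ∈ G.edgeFinset | ¬ ∃ x ∈ T, x ∈ e} :=
          (card_filter_add_card_filter_not _).symm
      _ ≤ k * #T + k * #(s \ T) := add_le_add hTk (hG' ▸ hrec)
      _ = k * #s := by rw [← mul_add, add_comm, card_sdiff_add_card_eq_card hTs]

theorem Walk.IsPath.length_add_one_eq_and_adj_of_le_degree [DecidableRel G.Adj]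
    (c : G.Coloring Bool) {ℓ : ℕ} (hfree : (pathGraph ℓ).Free G) {u v : V} {p : G.Walk u v}
    (hp : p.IsPath) (hmax : ∀ (u' v' : V) (q : G.Walk u' v'), q.IsPath → q.length ≤ p.length)
    (hdeg : ℓ / 2 ≤ G.degree u) :
    p.length + 1 = 2 * (ℓ / 2) ∧ G.Adj u v := by
  have hpℓ := hp.length_add_two_le_of_free hfree
  set B := {x ∈ p.support.toFinset | c x ≠ c u}
  have hNB : G.neighborFinset u ⊆ B := fun y hy => by
    have huy := (mem_neighborFinset _ _ _).1 hy
    exact mem_filter.2 ⟨List.mem_toFinset.2 (hp.mem_support_of_adj_of_forall_length_le hmax huy),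
      (c.valid huy).symm⟩
  have hB : #B ≤ (p.length + 1) / 2 := (c.card_support_filter_le p).2
  have hdegB := card_le_card hNB
  rw [card_neighborFinset_eq_degree] at hdegB
  have hlen : p.length + 1 = 2 * (ℓ / 2) := by omega
  refine ⟨hlen, ?_⟩
  -- `u` is adjacent to every vertex of the other colour on `p`, in particular to `v`
  have hodd : ¬ Even p.length := Nat.not_even_iff_odd.2 (Nat.odd_iff.2 (by omega))
  have hvB : v ∈ B := mem_filter.2 ⟨List.mem_toFinset.2 p.end_mem_support,
    fun h => hodd ((c.even_length_iff_congr p).2 (by rw [h]))⟩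
  rw [← eq_of_subset_of_card_le hNB (by rw [card_neighborFinset_eq_degree]; omega)] at hvB
  exact (mem_neighborFinset _ _ _).1 hvB

theorem exists_sparse_of_pathGraph_free [DecidableRel G.Adj] (c : G.Coloring Bool) {ℓ : ℕ}
    (hℓ : 4 ≤ ℓ) (hfree : (pathGraph ℓ).Free G) (hE : G.edgeSet.Nonempty) :
    ∃ T : Finset V, T.Nonempty ∧ ↑T ⊆ G.support ∧
      #{e ∈ G.edgeFinset | ∃ x ∈ T, x ∈ e} ≤ (ℓ / 2 - 1) * #T := by
  obtain ⟨⟨a, b⟩, hab⟩ := hE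
  have hab : G.Adj a b := hab
  have : Nonempty V := ⟨a⟩
  obtain ⟨u, v, p, hp, hmax⟩ := Walk.exists_isPath_forall_isPath_length_le_length G
  have hp1 : 1 ≤ p.length := hmax a b (Walk.cons hab .nil) (by simpa using hab.ne)
  have hp0 : ¬ p.Nil := fun h => by
    rw [← Walk.length_eq_zero_iff] at h
    omega
  have hsupp : ↑p.support.toFinset ⊆ G.support := fun x hx =>
    mem_support_of_mem_walk_support p hp0 (List.mem_toFinset.1 hx)
  by_cases hdeg : G.degree u < ℓ / 2
  · refine ⟨{u}, singleton_nonempty u, by simpa using hsupp (by simp), ?_⟩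
    rw [card_edgeFinset_filter_singleton, card_singleton]
    omega
  obtain ⟨hlen, huv⟩ :=
    hp.length_add_one_eq_and_adj_of_le_degree c hfree hmax (not_lt.1 hdeg)
  refine ⟨p.support.toFinset, ⟨u, by simp⟩, hsupp, ?_⟩
  obtain ⟨hA, hB⟩ := c.card_support_filter_le p
  have hT : #p.support.toFinset = 2 * (ℓ / 2) := by
    rw [List.toFinset_card_of_nodup hp.support_nodup, Walk.length_support, hlen]
  calc #{e ∈ G.edgeFinset | ∃ x ∈ p.support.toFinset, x ∈ e}
      ≤ #{x ∈ p.support.toFinset | c x = c u} * #{x ∈ p.support.toFinset | c x ≠ c u} :=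
        c.card_edgeFinset_filter_le
          (fun x hx y hxy => by
            simpa using hp.mem_support_of_adj_of_free hfree huv (by omega) (by omega)
              (List.mem_toFinset.1 hx) hxy) (c u)
    _ ≤ (ℓ / 2) * (ℓ / 2) := Nat.mul_le_mul (by omega) (by omega)
    _ ≤ (ℓ / 2 - 1) * #p.support.toFinset := by
        obtain ⟨k, hk⟩ : ∃ k, ℓ / 2 = k + 2 := ⟨ℓ / 2 - 2, by omega⟩
        rw [hT, hk, show k + 2 - 1 = k + 1 by omega]
        nlinarith

theorem card_edgeFinset_le_of_pathGraph_free [DecidableRel G.Adj] {ℓ : ℕ} (hℓ : 4 ≤ ℓ)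
    (hbip : G.Colorable 2) (hfree : (pathGraph ℓ).Free G) :
    #G.edgeFinset ≤ (ℓ / 2 - 1) * Fintype.card V := by
  obtain ⟨c⟩ := hbip
  refine card_edgeFinset_le_of_forall_exists_sparse _ (fun H _ hH hE => ?_) (s := univ) (by simp)
  exact exists_sparse_of_pathGraph_free ((G.recolorOfEquiv finTwoEquiv c).comp (Hom.ofLE hH)) hℓ
    (fun h => hfree (h.mono_right hH)) hE

end SimpleGraph

/-- **Lemma 3.1.** If `ℓ ≥ 4` and `G` is a `Pℓ`-free bipartite graph on `n` vertices,
then `e(G) ≤ (⌊ℓ/2⌋ - 1) n`. -/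
theorem star_path_forest_stmt0 (ℓ n : ℕ) (hℓ : 4 ≤ ℓ) (G : SimpleGraph (Fin n))
    [DecidableRel G.Adj] (hbip : G.Colorable 2)
    (hfree : ¬ Contains G (pathGraph ℓ)) :
    G.edgeFinset.card ≤ (ℓ / 2 - 1) * n := by
  simpa using card_edgeFinset_le_of_pathGraph_free hℓ hbip (contains_iff_isContained.not.1 hfree)
end

section
/- Let k ≥ 0, ℓ ≥ 4, and let G be a bipartite graph on n vertices with n ≥ (k+⌊ℓ/2⌋-1)² - (k+⌊ℓ/2⌋-2)·ℓ + ℓ²k + ℓ² - ℓ that contains no subgraph isomorphic to the disjoint union of k copies of the star S_{ℓ-1} together with a path P_ℓ. Then e(G) ≤ (k + ⌊ℓ/2⌋ - 1)·n. -/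
open SimpleGraph Finset


/-- The star on `m` vertices with center `0` (so `m - 1` leaves), i.e. `S_{m-1}`. -/
def starGraph (m : ℕ) : SimpleGraph (Fin m) where
  Adj i j := i ≠ j ∧ ((i : ℕ) = 0 ∨ (j : ℕ) = 0)
  symm := ⟨fun i j h => ⟨h.1.symm, h.2.symm⟩⟩
  loopless := ⟨fun i h => h.1 rfl⟩

/-- `k` disjoint copies of a graph `G`. -/
def kCopies {α : Type*} (k : ℕ) (G : SimpleGraph α) : SimpleGraph (Fin k × α) where
  Adj x y := x.1 = y.1 ∧ G.Adj x.2 y.2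
  symm := ⟨fun x y h => ⟨h.1.symm, h.2.symm⟩⟩
  loopless := ⟨fun x h => G.irrefl h.2⟩

/-- The star-path forest `k·S_{ℓ-1} ∪ P_ℓ`. -/
def starPathForest (k ℓ : ℕ) : SimpleGraph (Fin k × Fin ℓ ⊕ Fin ℓ) :=
  kCopies k (starGraph ℓ) ⊕g pathGraph ℓ

/-!
Edges inside a vertex set `s` are counted as ordered pairs, `#(G.interedges s s) = 2 e(G[s])`,
and the bound is proved for every vertex set `s` large enough, by induction on `k`.

For `k = 0`, strong induction on `s`: a vertex of degree `< ⌊ℓ/2⌋` can be deleted. Otherwise take a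
longest path; it has at most `ℓ - 1 ≤ 2⌊ℓ/2⌋` vertices, and the `⌊ℓ/2⌋` neighbours of its first
vertex lie on it at odd positions, so the first vertex is adjacent to the last one. The path thus
closes into a cycle, and maximality makes its vertex set `S` closed under adjacency. Being
bipartite, `G[S]` has at most `#S² / 4 ≤ (⌊ℓ/2⌋ - 1) #S` edges, and `s \ S` is handled by induction.

For `k + 1`: a vertex `v` of degree `≥ ℓ(k+2) - 1` can be deleted, because a star at `v` avoiding any
copy of `kS_{ℓ-1} ∪ P_ℓ` in `s \ {v}` would complete a copy of `(k+1)S_{ℓ-1} ∪ P_ℓ`. Otherwise a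
vertex of degree `≥ ℓ - 1` spans a star on `ℓ` vertices whose deletion destroys every copy of
`kS_{ℓ-1} ∪ P_ℓ` and costs fewer than `ℓ²(k+2)` edges, which the lower bound on `#s` absorbs; and if
every degree is `< ℓ - 1` the bound is immediate.
-/

def kCopiesSuccIso {α : Type*} (k : ℕ) (X : SimpleGraph α) :
    kCopies (k + 1) X ≃g X ⊕g kCopies k X where
  toEquiv := ((finSuccEquiv k).prodCongr (Equiv.refl α)).trans optionProdEquiv
  map_rel_iff' := by
    rintro ⟨i, a⟩ ⟨j, b⟩
    cases i using Fin.cases <;> cases j using Fin.cases <;>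
      simp [kCopies, Fin.succ_ne_zero, (Fin.succ_ne_zero _).symm]

def starPathForestSuccIso (k ℓ : ℕ) :
    starPathForest (k + 1) ℓ ≃g _root_.starGraph ℓ ⊕g starPathForest k ℓ :=
  ((kCopiesSuccIso k _).sumCongr Iso.refl).trans Iso.sumAssoc

namespace SimpleGraph

section Counting

variable {V : Type*} (G : SimpleGraph V) [DecidableRel G.Adj]

def degreeIn (s : Finset V) (v : V) : ℕ := #{w ∈ s | G.Adj v w}

lemma degreeIn_le_card (s : Finset V) (v : V) : G.degreeIn s v ≤ #s := card_filter_le _ _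

lemma card_interedges_eq_sum_degreeIn (s t : Finset V) :
    #(G.interedges s t) = ∑ v ∈ s, G.degreeIn t v := by
  simp only [interedges_def, degreeIn, card_filter, sum_product]

lemma card_interedges_univ_univ [Fintype V] :
    #(G.interedges univ univ) = 2 * #G.edgeFinset := by
  simp only [card_interedges_eq_sum_degreeIn, degreeIn, ← neighborFinset_eq_filter,
    card_neighborFinset_eq_degree, sum_degrees_eq_twice_card_edges]

lemma card_interedges_le_mul_of_degreeIn_le {s : Finset V} {d : ℕ}
    (hd : ∀ v ∈ s, G.degreeIn s v ≤ d) : #(G.interedges s s) ≤ d * #s := by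
  rw [card_interedges_eq_sum_degreeIn, mul_comm]
  exact sum_le_card_nsmul s _ d hd

variable [DecidableEq V]

lemma card_interedges_le_sdiff (s W : Finset V) :
    #(G.interedges s s) ≤ #(G.interedges (s \ W) (s \ W)) + 2 * ∑ w ∈ W, G.degreeIn s w := by
  have hsub : G.interedges s s ⊆
      G.interedges (s \ W) (s \ W) ∪ G.interedges W s ∪ G.interedges s W := by
    rintro ⟨a, b⟩ hab
    simp only [mem_union, mk_mem_interedges_iff, mem_sdiff] at hab ⊢
    by_cases ha : a ∈ W <;> by_cases hb : b ∈ W <;> tauto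
  have : Std.Symm G.Adj := G.symm
  have hcomm : #(G.interedges s W) = #(G.interedges W s) := Rel.card_interedges_comm s W
  calc #(G.interedges s s)
      ≤ #(G.interedges (s \ W) (s \ W)) + #(G.interedges W s) + #(G.interedges s W) :=
        (card_le_card hsub).trans <| (card_union_le _ _).trans <| by
          gcongr
          exact card_union_le _ _
    _ = #(G.interedges (s \ W) (s \ W)) + 2 * ∑ w ∈ W, G.degreeIn s w := by
        rw [hcomm, card_interedges_eq_sum_degreeIn G W s]
        ring

lemma card_interedges_le_of_closed {S s : Finset V}
    (hS : ∀ a ∈ S, ∀ b ∈ s, G.Adj a b → b ∈ S) :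
    #(G.interedges s s) ≤ #(G.interedges S S) + #(G.interedges (s \ S) (s \ S)) := by
  refine (card_le_card fun p hp => ?_).trans (card_union_le _ _)
  obtain ⟨a, b⟩ := p
  simp only [mem_union, mk_mem_interedges_iff, mem_sdiff] at hp ⊢
  by_cases ha : a ∈ S
  · exact .inl ⟨ha, hS a ha b hp.2.1 hp.2.2, hp.2.2⟩
  · by_cases hb : b ∈ S
    · exact absurd (hS b hb a hp.1 hp.2.2.symm) ha
    · exact .inr ⟨⟨hp.1, ha⟩, ⟨hp.2.1, hb⟩, hp.2.2⟩

lemma two_mul_card_interedges_le_sq (C : G.Coloring (Fin 2)) (S : Finset V) :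
    2 * #(G.interedges S S) ≤ #S ^ 2 := by
  set O := {x ∈ S | C x = 0}
  set E := {x ∈ S | ¬C x = 0}
  have hsub : G.interedges S S ⊆ O ×ˢ E ∪ E ×ˢ O := by
    rintro ⟨a, b⟩ hab
    rw [mk_mem_interedges_iff] at hab
    have hC : ∀ x y : Fin 2, x ≠ y → x = 0 ∧ ¬y = 0 ∨ ¬x = 0 ∧ y = 0 := by decide
    simp only [mem_union, mem_product, mem_filter, O, E]
    have := hC _ _ (C.valid hab.2.2)
    tauto
  have hcard : #O + #E = #S := card_filter_add_card_filter_not _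
  calc 2 * #(G.interedges S S) ≤ 2 * (#O * #E + #E * #O) := by
        gcongr
        exact (card_le_card hsub).trans ((card_union_le _ _).trans (by simp [card_product]))
    _ ≤ #S ^ 2 := by
        rw [← hcard]
        nlinarith [sq_nonneg ((#O : ℤ) - #E)]

end Counting

section Containment

variable {V α β : Type*} (G : SimpleGraph V)

def ContainsOn (s : Finset V) (H : SimpleGraph β) : Prop :=
  ∃ f : Copy H G, ∀ x, f x ∈ s

variable {G} {s t : Finset V} {A : SimpleGraph α} {B : SimpleGraph β}

lemma ContainsOn.mono (h : G.ContainsOn s B) (hst : s ⊆ t) : G.ContainsOn t B :=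
  let ⟨f, hf⟩ := h
  ⟨f, fun x => hst (hf x)⟩

lemma ContainsOn.of_copy (h : G.ContainsOn s B) (e : Copy A B) : G.ContainsOn s A :=
  let ⟨f, hf⟩ := h
  ⟨f.comp e, fun x => hf (e x)⟩

lemma containsOn_of_isEmpty [IsEmpty β] : G.ContainsOn s B :=
  ⟨⟨⟨isEmptyElim, fun {a} => isEmptyElim a⟩, fun a => isEmptyElim a⟩, isEmptyElim⟩

lemma ContainsOn.sum [DecidableEq V] (hA : G.ContainsOn s A) (hB : G.ContainsOn t B)
    (hst : Disjoint s t) : G.ContainsOn (s ∪ t) (A ⊕g B) := by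
  obtain ⟨f, hf⟩ := hA
  obtain ⟨g, hg⟩ := hB
  refine ⟨⟨⟨Sum.elim f g, ?_⟩, f.injective.sumElim g.injective fun a b hab => ?_⟩, ?_⟩
  · rintro (a | b) (a' | b') h <;> simp only [sum_adj_inl, sum_adj_inr, Sum.elim_inl,
      Sum.elim_inr] at h ⊢
    exacts [f.toHom.map_adj h, by simp at h, by simp at h, g.toHom.map_adj h]
  · exact hst.forall_ne_finset (hf a) (hg b) hab
  · rintro (a | b)
    exacts [mem_union_left _ (hf a), mem_union_right _ (hg b)]

lemma containsOn_starGraph [DecidableEq V] {v : V} {T : Finset V} (hT : ∀ w ∈ T, G.Adj v w) :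
    G.ContainsOn (insert v T) (_root_.starGraph (#T + 1)) := by
  let leaf : Fin #T → V := fun j => T.equivFin.symm j
  let star : Fin (#T + 1) → V := Fin.cons v leaf
  have hvT : v ∉ T := fun h => G.irrefl (hT v h)
  have hcenter : ∀ j : Fin (#T + 1), j ≠ 0 → G.Adj v (star j) := by
    intro j hj
    cases j using Fin.cases with
    | zero => exact absurd rfl hj
    | succ j => exact hT _ (T.equivFin.symm j).2
  refine ⟨⟨⟨star, fun {i j} hij => ?_⟩, ?_⟩, fun j => ?_⟩
  · obtain ⟨hne, hi | hj⟩ := hij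
    · obtain rfl : i = 0 := Fin.ext hi
      exact hcenter j hne.symm
    · obtain rfl : j = 0 := Fin.ext hj
      exact (hcenter i hne).symm
  · refine Fin.cons_injective_iff.2 ⟨?_, Subtype.val_injective.comp T.equivFin.symm.injective⟩
    rintro ⟨j, hj⟩
    exact hvT (hj ▸ (T.equivFin.symm j).2)
  · cases j using Fin.cases with
    | zero => exact mem_insert_self v T
    | succ j => exact mem_insert_of_mem (T.equivFin.symm j).2

end Containment

section Paths

variable {V : Type*} (G : SimpleGraph V)

structure IsPathIn (s : Finset V) (m : ℕ) (f : ℕ → V) : Prop where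
  mem : ∀ i < m, f i ∈ s
  adj : ∀ i, i + 1 < m → G.Adj (f i) (f (i + 1))
  injOn : Set.InjOn f (Set.Iio m)

variable {G} {s : Finset V} {m : ℕ} {f : ℕ → V}

lemma IsPathIn.card_le (hf : G.IsPathIn s m f) : m ≤ #s := by
  classical
  calc m = #((range m).image f) := by
        rw [card_image_of_injOn (by simpa using hf.injOn), card_range]
    _ ≤ #s := card_le_card (image_subset_iff.2 fun i hi => hf.mem i (mem_range.1 hi))

lemma IsPathIn.containsOn {ℓ : ℕ} (hf : G.IsPathIn s m f) (hℓ : ℓ ≤ m) :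
    G.ContainsOn s (pathGraph ℓ) := by
  refine ⟨⟨⟨fun i => f i, fun {i j} hij => ?_⟩, fun i j hij => Fin.ext (hf.injOn
    (Set.mem_Iio.2 (by omega)) (Set.mem_Iio.2 (by omega)) hij)⟩, fun i => hf.mem i (by omega)⟩
  rcases pathGraph_adj.1 hij with h | h
  · rw [← h]
    exact hf.adj i (by omega)
  · rw [← h]
    exact (hf.adj j (by omega)).symm

lemma IsPathIn.cons {w : V} (hf : G.IsPathIn s m f) (hw : w ∈ s) (hadj : G.Adj w (f 0))
    (hwf : ∀ j < m, f j ≠ w) :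
    G.IsPathIn s (m + 1) (fun t => if t = 0 then w else f (t - 1)) where
  mem t ht := by
    split_ifs
    exacts [hw, hf.mem _ (by omega)]
  adj t ht := by
    rcases t with _ | t
    · simpa using hadj
    · simpa using hf.adj t (by omega)
  injOn t ht t' ht' h := by
    simp only [Set.mem_Iio] at ht ht'
    rcases t with _ | t <;> rcases t' with _ | t' <;> simp only [if_true, if_false,
      Nat.add_one_ne_zero, add_tsub_cancel_right] at h
    · rfl
    · exact absurd h.symm (hwf t' (by omega))
    · exact absurd h (hwf t (by omega))
    · rw [hf.injOn (Set.mem_Iio.2 (by omega)) (Set.mem_Iio.2 (by omega)) h]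

lemma IsPathIn.rotate {i : ℕ} (hf : G.IsPathIn s m f) (hcyc : G.Adj (f (m - 1)) (f 0))
    (hi : i < m) : G.IsPathIn s m (fun t => f (if i + t < m then i + t else i + t - m)) where
  mem t ht := hf.mem _ (by split_ifs <;> omega)
  adj t ht := by
    by_cases h1 : i + t + 1 < m
    · rw [if_pos (by omega), if_pos (by omega)]
      exact hf.adj (i + t) h1
    by_cases h2 : i + t < m
    · rw [if_pos h2, if_neg (by omega), show i + t = m - 1 by omega,
        show i + (t + 1) - m = 0 by omega]
      exact hcyc
    · rw [if_neg h2, if_neg (by omega), show i + (t + 1) - m = i + t - m + 1 by omega]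
      exact hf.adj _ (by omega)
  injOn t ht t' ht' h := by
    simp only [Set.mem_Iio] at ht ht'
    have := hf.injOn (Set.mem_Iio.2 (by split_ifs <;> omega))
      (Set.mem_Iio.2 (by split_ifs <;> omega)) h
    split_ifs at this <;> omega

lemma IsPathIn.color_eq_iff_even (C : G.Coloring (Fin 2)) (hf : G.IsPathIn s m f) :
    ∀ i < m, (C (f i) = C (f 0) ↔ Even i)
  | 0, _ => by simp
  | i + 1, hi => by
    have hstep : ∀ x y z : Fin 2, x ≠ y → (y = z ↔ ¬x = z) := by decide
    rw [hstep _ _ _ (C.valid (hf.adj i hi)), hf.color_eq_iff_even C i (by omega),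
      Nat.even_add_one]

lemma exists_isPathIn_maximal (hs : s.Nonempty) :
    ∃ m f, 0 < m ∧ G.IsPathIn s m f ∧ ∀ g, ¬G.IsPathIn s (m + 1) g := by
  classical
  obtain ⟨v, hv⟩ := hs
  have h1 : ∃ f, G.IsPathIn s 1 f :=
    ⟨fun _ => v, ⟨fun _ _ => hv, fun i hi => by omega, fun i hi j hj _ => by simp_all⟩⟩
  have h1s : 1 ≤ #s := card_pos.2 ⟨v, hv⟩
  obtain ⟨f, hf⟩ := Nat.findGreatest_spec (P := fun m => ∃ f, G.IsPathIn s m f) h1s h1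
  refine ⟨_, f, Nat.le_findGreatest h1s h1, hf, fun g hg => ?_⟩
  have := Nat.le_findGreatest (P := fun m => ∃ f, G.IsPathIn s m f) hg.card_le ⟨g, hg⟩
  omega

lemma IsPathIn.exists_eq_of_adj_first (hf : G.IsPathIn s m f)
    (hmax : ∀ g, ¬G.IsPathIn s (m + 1) g) {w : V} (hw : w ∈ s) (hadj : G.Adj (f 0) w) :
    ∃ j < m, f j = w := by
  by_contra! hwf
  exact hmax _ (hf.cons hw hadj.symm hwf)

lemma IsPathIn.exists_eq_of_adj (hf : G.IsPathIn s m f) (hmax : ∀ g, ¬G.IsPathIn s (m + 1) g)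
    (hcyc : G.Adj (f (m - 1)) (f 0)) {i : ℕ} (hi : i < m) {w : V} (hw : w ∈ s)
    (hadj : G.Adj (f i) w) : ∃ j < m, f j = w := by
  obtain ⟨j, hj, rfl⟩ :=
    (hf.rotate hcyc hi).exists_eq_of_adj_first hmax hw (by simpa [hi] using hadj)
  exact ⟨_, by split_ifs <;> omega, rfl⟩

variable [DecidableRel G.Adj] [DecidableEq V]

lemma IsPathIn.adj_last_first (C : G.Coloring (Fin 2)) (hf : G.IsPathIn s m f)
    (hmax : ∀ g, ¬G.IsPathIn s (m + 1) g) {d : ℕ} (hd : 0 < d) (hm : m ≤ 2 * d)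
    (hdeg : d ≤ G.degreeIn s (f 0)) : G.Adj (f (m - 1)) (f 0) := by
  set odd := (range (m / 2)).image fun i => f (2 * i + 1)
  have hsub : {w ∈ s | G.Adj (f 0) w} ⊆ odd := by
    intro w hw
    rw [mem_filter] at hw
    obtain ⟨j, hj, rfl⟩ := hf.exists_eq_of_adj_first hmax hw.1 hw.2
    have hodd : j % 2 = 1 :=
      Nat.not_even_iff.1 fun h2 => C.valid hw.2 ((hf.color_eq_iff_even C j hj).2 h2).symm
    exact mem_image.2 ⟨j / 2, mem_range.2 (by omega), by congr 1; omega⟩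
  have hodd : #odd ≤ m / 2 := card_image_le.trans (card_range _).le
  have hsubcard := card_le_card hsub
  unfold degreeIn at hdeg
  have heq : {w ∈ s | G.Adj (f 0) w} = odd := eq_of_subset_of_card_le hsub (by omega)
  have hlast : f (m - 1) ∈ odd :=
    mem_image.2 ⟨m / 2 - 1, mem_range.2 (by omega), by congr 1; omega⟩
  rw [← heq, mem_filter] at hlast
  exact hlast.2.symm

lemma exists_closed_of_not_containsOn_pathGraph (C : G.Coloring (Fin 2)) {ℓ : ℕ}
    (hfree : ¬G.ContainsOn s (pathGraph ℓ)) (hmin : ∀ v ∈ s, ℓ / 2 ≤ G.degreeIn s v)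
    (hs : s.Nonempty) :
    ∃ S ⊆ s, S.Nonempty ∧ #S < ℓ ∧ ∀ a ∈ S, ∀ b ∈ s, G.Adj a b → b ∈ S := by
  obtain ⟨m, f, hm, hf, hmax⟩ := G.exists_isPathIn_maximal hs
  have hmℓ : m < ℓ := lt_of_not_ge fun h => hfree (hf.containsOn h)
  have hcyc := hf.adj_last_first C hmax (d := ℓ / 2) (by omega) (by omega) (hmin _ (hf.mem 0 hm))
  refine ⟨(range m).image f, image_subset_iff.2 fun i hi => hf.mem i (mem_range.1 hi),
    ⟨f 0, mem_image_of_mem f (mem_range.2 hm)⟩, card_image_le.trans_lt (by simpa), ?_⟩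
  simp only [mem_image, mem_range, forall_exists_index, and_imp]
  rintro _ i hi rfl b hb hab
  exact hf.exists_eq_of_adj hmax hcyc hi hb hab

end Paths

section StarPathForest

variable {V : Type*} [DecidableEq V] {G : SimpleGraph V}

lemma not_containsOn_sdiff_of_containsOn_starGraph {k ℓ : ℕ} {s W : Finset V}
    (hs : ¬G.ContainsOn s (starPathForest (k + 1) ℓ))
    (hW : G.ContainsOn W (_root_.starGraph ℓ)) (hWs : W ⊆ s) :
    ¬G.ContainsOn (s \ W) (starPathForest k ℓ) := fun h =>
  hs (((hW.sum h disjoint_sdiff).mono (union_sdiff_of_subset hWs).le).of_copy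
    (starPathForestSuccIso k ℓ).toCopy)

variable (G) [DecidableRel G.Adj]

theorem card_interedges_le_of_not_containsOn_pathGraph (C : G.Coloring (Fin 2)) {ℓ : ℕ}
    (hℓ : 4 ≤ ℓ) (s : Finset V) (hfree : ¬G.ContainsOn s (pathGraph ℓ)) :
    #(G.interedges s s) ≤ 2 * (ℓ / 2 - 1) * #s := by
  induction s using Finset.strongInduction with
  | H s ih =>
  by_cases hlow : ∃ v ∈ s, G.degreeIn s v < ℓ / 2
  · obtain ⟨v, hv, hdeg⟩ := hlow
    have hrest := ih (s.erase v) (erase_ssubset hv) fun h => hfree (h.mono (erase_subset v s))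
    have hdel := G.card_interedges_le_sdiff s {v}
    rw [sum_singleton, sdiff_singleton_eq_erase] at hdel
    rw [← card_erase_add_one hv]
    have : G.degreeIn s v ≤ ℓ / 2 - 1 := by omega
    generalize ℓ / 2 - 1 = c at *
    linarith
  push Not at hlow
  obtain rfl | hs := s.eq_empty_or_nonempty
  · simp
  obtain ⟨S, hSs, hSne, hSℓ, hclosed⟩ :=
    G.exists_closed_of_not_containsOn_pathGraph C hfree hlow hs
  have hrest := ih (s \ S) (sdiff_ssubset hSs hSne) fun h => hfree (h.mono sdiff_subset)
  have hsplit := G.card_interedges_le_of_closed hclosed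
  have hS := G.two_mul_card_interedges_le_sq C S
  have hSle : #S ≤ 4 * (ℓ / 2 - 1) := by omega
  rw [← card_sdiff_add_card_eq_card hSs]
  nlinarith [Nat.mul_le_mul_left #S hSle]

lemma exists_containsOn_starGraph_of_le_degreeIn {ℓ : ℕ} (hℓ : 1 ≤ ℓ) {s R : Finset V}
    {v : V} (hv : v ∈ s) (hvR : v ∉ R) (hdeg : #R + ℓ ≤ G.degreeIn s v + 1) :
    ∃ W ⊆ s, #W = ℓ ∧ Disjoint W R ∧ G.ContainsOn W (_root_.starGraph ℓ) := by
  obtain ⟨T, hT, hTcard⟩ := exists_subset_card_eq (s := {w ∈ s | G.Adj v w} \ R)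
    (n := ℓ - 1) (by have := le_card_sdiff R {w ∈ s | G.Adj v w}; unfold degreeIn at hdeg; omega)
  have hTs : ∀ w ∈ T, w ∈ s ∧ G.Adj v w ∧ w ∉ R := fun w hw => by
    simpa [and_assoc] using hT hw
  have hvT : v ∉ T := fun h => G.irrefl (hTs v h).2.1
  refine ⟨insert v T, insert_subset hv fun w hw => (hTs w hw).1, ?_, ?_, ?_⟩
  · rw [card_insert_of_notMem hvT]
    omega
  · exact disjoint_insert_left.2 ⟨hvR, Finset.disjoint_left.2 fun _ hw => (hTs _ hw).2.2⟩
  · have := G.containsOn_starGraph fun w hw => (hTs w hw).2.1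
    rwa [hTcard, Nat.sub_add_cancel hℓ] at this

variable {G}

lemma not_containsOn_erase_of_le_degreeIn {k ℓ : ℕ} (hℓ : 1 ≤ ℓ) {s : Finset V} {v : V}
    (hs : ¬G.ContainsOn s (starPathForest (k + 1) ℓ)) (hv : v ∈ s)
    (hdeg : ℓ * (k + 2) ≤ G.degreeIn s v + 1) :
    ¬G.ContainsOn (s.erase v) (starPathForest k ℓ) := by
  rintro ⟨f, hf⟩
  have hR : #(univ.image f) + ℓ ≤ ℓ * (k + 2) := by
    have : #(univ.image f) ≤ k * ℓ + ℓ := card_image_le.trans (by simp)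
    nlinarith
  obtain ⟨W, hWs, -, hWR, hW⟩ := G.exists_containsOn_starGraph_of_le_degreeIn hℓ hv
    (fun h => by obtain ⟨x, -, hx⟩ := mem_image.1 h; exact (mem_erase.1 (hx ▸ hf x)).1 rfl)
    (hR.trans hdeg)
  refine not_containsOn_sdiff_of_containsOn_starGraph hs hW hWs ⟨f, fun x => mem_sdiff.2
    ⟨(mem_erase.1 (hf x)).2, Finset.disjoint_right.1 hWR (mem_image_of_mem f (mem_univ x))⟩⟩

variable (G)

/-- The lower bound on `#s` is what deleting a star in the inductive step requires. -/
theorem card_interedges_le_of_not_containsOn_starPathForest (C : G.Coloring (Fin 2)) {ℓ : ℕ}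
    (hℓ : 4 ≤ ℓ) (k : ℕ) {s : Finset V} (hs : ℓ ^ 2 * (k + 1) ≤ #s + ℓ * (k + ℓ / 2))
    (hfree : ¬G.ContainsOn s (starPathForest k ℓ)) :
    #(G.interedges s s) ≤ 2 * (k + ℓ / 2 - 1) * #s := by
  induction k generalizing s with
  | zero =>
    simpa using G.card_interedges_le_of_not_containsOn_pathGraph C hℓ s fun h =>
      hfree (((containsOn_of_isEmpty (s := ∅)).sum h (disjoint_empty_left s)).mono
        (empty_union s).le)
  | succ k ih =>
  rw [show k + 1 + ℓ / 2 - 1 = (k + ℓ / 2 - 1) + 1 by omega]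
  by_cases hA : ∃ v ∈ s, ℓ * (k + 2) ≤ G.degreeIn s v + 1
  · obtain ⟨v, hv, hdeg⟩ := hA
    have hcard := card_erase_add_one hv
    have hrest := ih (s := s.erase v) (by nlinarith)
      (not_containsOn_erase_of_le_degreeIn (by omega) hfree hv hdeg)
    have hdel := G.card_interedges_le_sdiff s {v}
    rw [sum_singleton, sdiff_singleton_eq_erase] at hdel
    have := G.degreeIn_le_card s v
    generalize k + ℓ / 2 - 1 = c at *
    nlinarith
  push Not at hA
  by_cases hB : ∃ v ∈ s, ℓ ≤ G.degreeIn s v + 1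
  · obtain ⟨v, hv, hdeg⟩ := hB
    obtain ⟨W, hWs, hW, -, hstar⟩ := G.exists_containsOn_starGraph_of_le_degreeIn (ℓ := ℓ)
      (R := ∅) (by omega) hv (notMem_empty v) (by simpa using hdeg)
    have hcard := card_sdiff_add_card_eq_card hWs
    have hrest := ih (s := s \ W) (by nlinarith)
      (not_containsOn_sdiff_of_containsOn_starGraph hfree hstar hWs)
    have hdel := G.card_interedges_le_sdiff s W
    have hsum : ∑ w ∈ W, (G.degreeIn s w + 2) ≤ ∑ w ∈ W, ℓ * (k + 2) :=
      sum_le_sum fun w hw => by have := hA w (hWs hw); omega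
    rw [sum_add_distrib, sum_const, sum_const, hW, smul_eq_mul, smul_eq_mul] at hsum
    rw [show k + 1 + ℓ / 2 = (k + ℓ / 2 - 1) + 2 by omega] at hs
    generalize k + ℓ / 2 - 1 = c at *
    nlinarith
  push Not at hB
  refine (G.card_interedges_le_mul_of_degreeIn_le (d := ℓ - 2) fun v hv => ?_).trans
    (Nat.mul_le_mul_right _ (by omega))
  have := hB v hv
  omega

end StarPathForest

end SimpleGraph

/-- **Lemma 3.2.** If `k ≥ 0`, `ℓ ≥ 4` and `G` is a `kS_{ℓ-1} ∪ P_ℓ`-free bipartite graph on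
`n ≥ (k+⌊ℓ/2⌋-1)² - (k+⌊ℓ/2⌋-2)ℓ + ℓ²k + ℓ² - ℓ` vertices, then
`e(G) ≤ (k + ⌊ℓ/2⌋ - 1) n`. -/
theorem star_path_forest_stmt1 (k ℓ n : ℕ) (hℓ : 4 ≤ ℓ)
    (hn : ((k : ℤ) + ((ℓ / 2 : ℕ) : ℤ) - 1) ^ 2 - ((k : ℤ) + ((ℓ / 2 : ℕ) : ℤ) - 2) * ℓ
        + (ℓ : ℤ) ^ 2 * k + (ℓ : ℤ) ^ 2 - ℓ ≤ (n : ℤ))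
    (G : SimpleGraph (Fin n)) [DecidableRel G.Adj] (hbip : G.Colorable 2)
    (hfree : ¬ Contains G (starPathForest k ℓ)) :
    (G.edgeFinset.card : ℤ) ≤ ((k : ℤ) + ((ℓ / 2 : ℕ) : ℤ) - 1) * n := by
  obtain ⟨C⟩ := hbip
  have hthreshold : ℓ ^ 2 * (k + 1) ≤ #(univ : Finset (Fin n)) + ℓ * (k + ℓ / 2) := by
    have : (ℓ : ℤ) ^ 2 * (k + 1) ≤ n + ℓ * (k + ((ℓ / 2 : ℕ) : ℤ)) := by
      nlinarith [sq_nonneg ((k : ℤ) + ((ℓ / 2 : ℕ) : ℤ) - 1)]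
    rw [card_univ, Fintype.card_fin]
    exact_mod_cast this
  have hbound := G.card_interedges_le_of_not_containsOn_starPathForest C hℓ k hthreshold
    fun ⟨f, _⟩ => hfree ⟨f.toHom, f.injective⟩
  rw [card_interedges_univ_univ, card_univ, Fintype.card_fin, mul_assoc] at hbound
  have hk : 1 ≤ k + ℓ / 2 := by omega
  have hedges : G.edgeFinset.card ≤ (k + ℓ / 2 - 1) * n := by omega
  have : (G.edgeFinset.card : ℤ) ≤ ((k + ℓ / 2 - 1 : ℕ) : ℤ) * n := by exact_mod_cast hedges
  push_cast [hk] at this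
  exact this
end

section
/- Let G be a graph of order n with minimum degree δ and e edges. Then the spectral radius of G satisfies ρ(G) ≤ (δ − 1 + √(8e − 4δn + (δ+1)²))/2. -/
/-!
If `A x = t x` with `x ≠ 0` for a symmetric nonnegative matrix `A`, then `|t| |x| ≤ A |x|`
entrywise; pairing with any positive `z` such that `A z ≤ B z` and using the symmetry of `A`
gives `|t| ≤ B`. For the adjacency matrix take `z_v = d_v + c`. Every vertex outside the closed
neighbourhood of `v` has degree at least `δ`, so the degrees of the neighbours of `v` sum to at
most `2e - d_v - δ (n - 1 - d_v)`, whence `A z ≤ (δ - 1 + c) z` as soon as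
`(δ - 1 + c) c ≥ 2e - δ (n - 1)`. The least admissible `δ - 1 + c` is the root of this quadratic,
which is the stated bound.
-/

open SimpleGraph Finset

/-- The spectral radius of a finite graph: the largest eigenvalue of its
adjacency matrix, expressed as the supremum of the set of eigenvalues. -/
noncomputable def specRad {V : Type*} [Fintype V] (G : SimpleGraph V) : ℝ :=
  letI := Classical.decRel G.Adj
  sSup {t : ℝ | ∃ x : V → ℝ, x ≠ 0 ∧ (G.adjMatrix ℝ).mulVec x = t • x}

open Matrix

namespace Matrix

variable {ι : Type*} [Fintype ι] {A : Matrix ι ι ℝ}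

theorem abs_smul_abs_le_mulVec_abs (hA : ∀ i j, 0 ≤ A i j) {t : ℝ} {x : ι → ℝ}
    (hxt : A *ᵥ x = t • x) : |t| • |x| ≤ A *ᵥ |x| := fun i =>
  calc |t| * |x i| = |∑ j, A i j * x j| := by
        rw [← abs_mul, ← smul_eq_mul, ← Pi.smul_apply, ← hxt]; rfl
    _ ≤ ∑ j, |A i j * x j| := abs_sum_le_sum_abs _ _
    _ = ∑ j, A i j * |x j| := by simp only [abs_mul, abs_of_nonneg (hA i _)]

theorem IsSymm.abs_le_of_mulVec_le_smul (hA : A.IsSymm) (hA_nonneg : ∀ i j, 0 ≤ A i j)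
    {z : ι → ℝ} (hz : ∀ i, 0 < z i) {B : ℝ} (hAz : A *ᵥ z ≤ B • z) {t : ℝ} {x : ι → ℝ}
    (hx : x ≠ 0) (hxt : A *ᵥ x = t • x) : |t| ≤ B := by
  obtain ⟨i, hi⟩ := Function.ne_iff.mp hx
  have hpos : 0 < |x| ⬝ᵥ z := sum_pos' (fun j _ => mul_nonneg (abs_nonneg _) (hz j).le)
    ⟨i, mem_univ i, mul_pos (abs_pos.mpr hi) (hz i)⟩
  refine le_of_mul_le_mul_right ?_ hpos
  calc |t| * (|x| ⬝ᵥ z) = (|t| • |x|) ⬝ᵥ z := by rw [smul_dotProduct, smul_eq_mul]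
    _ ≤ (A *ᵥ |x|) ⬝ᵥ z := dotProduct_le_dotProduct_of_nonneg_right
        (abs_smul_abs_le_mulVec_abs hA_nonneg hxt) fun j => (hz j).le
    _ = |x| ⬝ᵥ (A *ᵥ z) := by rw [dotProduct_mulVec, ← mulVec_transpose, hA.eq]
    _ ≤ |x| ⬝ᵥ (B • z) := dotProduct_le_dotProduct_of_nonneg_left hAz fun j => abs_nonneg _
    _ = B * (|x| ⬝ᵥ z) := dotProduct_smul _ _ _

end Matrix

namespace SimpleGraph

variable {V : Type*} [Fintype V] (G : SimpleGraph V) [DecidableRel G.Adj]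

theorem minDegree_mul_card_le : G.minDegree * Fintype.card V ≤ 2 * #G.edgeFinset := by
  rw [← sum_degrees_eq_twice_card_edges, mul_comm, ← smul_eq_mul, ← card_univ]
  exact card_nsmul_le_sum _ _ _ fun v _ => G.minDegree_le_degree v

theorem sum_degree_neighborFinset_le (v : V) :
    ∑ w ∈ G.neighborFinset v, (G.degree w : ℝ) ≤
      2 * #G.edgeFinset - G.degree v - G.minDegree * (Fintype.card V - 1 - G.degree v) := by
  classical
  set s := insert v (G.neighborFinset v)
  have hv := G.notMem_neighborFinset_self v
  have hcard : (#sᶜ : ℝ) = Fintype.card V - 1 - G.degree v := by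
    rw [card_compl, card_insert_of_notMem hv, card_neighborFinset_eq_degree,
      Nat.cast_sub (G.degree_lt_card_verts v)]
    push_cast; ring
  have hlow : #sᶜ • (G.minDegree : ℝ) ≤ ∑ w ∈ sᶜ, (G.degree w : ℝ) :=
    card_nsmul_le_sum _ _ _ fun w _ => Nat.cast_le.mpr (G.minDegree_le_degree w)
  have htot : ∑ w, (G.degree w : ℝ) = 2 * #G.edgeFinset := by
    exact_mod_cast G.sum_degrees_eq_twice_card_edges
  rw [← sum_compl_add_sum s, sum_insert hv] at htot
  rw [nsmul_eq_mul, hcard] at hlow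
  linarith

theorem adjMatrix_mulVec_degree_add_le {c : ℝ}
    (hc : 2 * #G.edgeFinset - G.minDegree * (Fintype.card V - 1 : ℝ) ≤
      (G.minDegree - 1 + c) * c) :
    G.adjMatrix ℝ *ᵥ (fun v => (G.degree v : ℝ) + c) ≤
      ((G.minDegree : ℝ) - 1 + c) • fun v => (G.degree v : ℝ) + c := by
  intro v
  simp only [adjMatrix_mulVec_apply, sum_add_distrib, sum_const, card_neighborFinset_eq_degree,
    nsmul_eq_mul, Pi.smul_apply, smul_eq_mul]
  linear_combination G.sum_degree_neighborFinset_le v + hc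

end SimpleGraph

theorem specRad_le {V : Type*} [Fintype V] (G : SimpleGraph V) [DecidableRel G.Adj] {B : ℝ}
    (hB : 0 ≤ B) (h : ∀ t x, x ≠ 0 → G.adjMatrix ℝ *ᵥ x = t • x → t ≤ B) : specRad G ≤ B := by
  refine Real.sSup_le ?_ hB
  rintro t ⟨x, hx, hxt⟩
  -- `specRad` is defined with `Classical.decRel G.Adj`
  exact h t x hx (by convert hxt)

/-- **Hong–Shu–Fang / Nikiforov.**  For a graph `G` of order `n` with minimum degree `δ`
and `e` edges, `ρ(G) ≤ (δ − 1 + √(8e − 4δn + (δ+1)²))/2`. -/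
theorem star_path_forest_stmt7 (n : ℕ) (G : SimpleGraph (Fin n)) [DecidableRel G.Adj] :
    specRad G ≤ ((G.minDegree : ℝ) - 1 +
      Real.sqrt (8 * G.edgeFinset.card - 4 * G.minDegree * n +
        ((G.minDegree : ℝ) + 1) ^ 2)) / 2 := by
  set d : ℝ := (G.minDegree : ℝ)
  set s := Real.sqrt (8 * G.edgeFinset.card - 4 * d * n + (d + 1) ^ 2)
  have hdn : d * n ≤ 2 * #G.edgeFinset := by
    simpa using (Nat.cast_le (α := ℝ)).mpr G.minDegree_mul_card_le
  have hd : 0 ≤ d := Nat.cast_nonneg _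
  have hs2 : s ^ 2 = 8 * G.edgeFinset.card - 4 * d * n + (d + 1) ^ 2 :=
    Real.sq_sqrt (by nlinarith)
  have hds : d + 1 ≤ s := Real.le_sqrt_of_sq_le (by linarith)
  clear_value s
  obtain ⟨c, rfl⟩ : ∃ c, s = d - 1 + 2 * c := ⟨(s - d + 1) / 2, by ring⟩
  have hc : 2 * #G.edgeFinset - d * (Fintype.card (Fin n) - 1 : ℝ) ≤ (d - 1 + c) * c := by
    rw [Fintype.card_fin]
    linear_combination (-1 / 4 : ℝ) * hs2
  have hc0 : 0 < c := by linarith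
  have hzpos : ∀ v, 0 < (G.degree v : ℝ) + c := fun v => by positivity
  rw [show (d - 1 + (d - 1 + 2 * c)) / 2 = d - 1 + c by ring]
  refine specRad_le G (by linarith) fun t x hx hxt => (le_abs_self t).trans ?_
  exact G.isSymm_adjMatrix.abs_le_of_mulVec_le_smul
    (fun i j => by rw [adjMatrix_apply]; positivity) hzpos
    (G.adjMatrix_mulVec_degree_add_le hc) hx hxt
end
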